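/- Fix an integer d ≥ 1, a field K, V = K^d with standard basis e_1,…,e_d, V^i = span(e_1,…,e_i), and a function g : ℝ → ℤ_{≥0} with finite support and ∑_x g(x) = d. Fix 1 ≤ i ≤ d−1 and let P = {A ∈ GL(V) : A(V^i) = V^i}. Let h : ℝ → ℤ_{≥0} satisfy h(x) ≤ g(x) for all x and ∑_x h(x) = i. Then the set Y = {F a filtration of type g on V : dim_K gr^x_F(V^i) = h(x) for all x ∈ ℝ}, where V^i carries the filtration induced by F, is nonempty, and P acts transitively on Y via (A·F)^x = A(F^x). -/

import Mathlib

open Submodule Module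

/-- An ℝ-filtration on a `k`-vector space `V`: an antitone family of subspaces which is
exhaustive, separated, and left-continuous. -/
structure RFiltration (k V : Type*) [Field k] [AddCommGroup V] [Module k V] where
  filt : ℝ → Submodule k V
  antitone' : Antitone filt
  eventually_top : ∃ a : ℝ, ∀ x : ℝ, x ≤ a → filt x = ⊤
  eventually_bot : ∃ b : ℝ, ∀ x : ℝ, b ≤ x → filt x = ⊥
  left_cont : ∀ x : ℝ, filt x = ⨅ y : {y : ℝ // y < x}, filt y.1

namespace RFiltration

variable {k V W : Type*} [Field k] [AddCommGroup V] [Module k V]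
  [AddCommGroup W] [Module k W]

/-- `F^{x+} = ⋃_{y > x} F^y`. -/
noncomputable def plus (F : RFiltration k V) (x : ℝ) : Submodule k V :=
  ⨆ y : {y : ℝ // x < y}, F.filt y.1

/-- `dim gr^x(V) = dim (F^x / F^{x+})`. -/
noncomputable def grDim (F : RFiltration k V) (x : ℝ) : ℕ :=
  Module.finrank k (↥(F.filt x) ⧸ (F.plus x).comap (F.filt x).subtype)

/-- The degree `deg(V,F) = ∑_x x · dim gr^x(V)`. -/
noncomputable def deg (F : RFiltration k V) : ℝ :=
  ∑ᶠ x : ℝ, x * (F.grDim x : ℝ)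

/-- The induced filtration `U ∩ F^x` on a subspace `U ⊆ V`. -/
noncomputable def induced (F : RFiltration k V) (U : Submodule k V) : RFiltration k U where
  filt x := (F.filt x).comap U.subtype
  antitone' := fun _ _ h => Submodule.comap_mono (F.antitone' h)
  eventually_top := by
    obtain ⟨a, ha⟩ := F.eventually_top
    exact ⟨a, fun x hx => by simp [ha x hx]⟩
  eventually_bot := by
    obtain ⟨b, hb⟩ := F.eventually_bot
    exact ⟨b, fun x hx => by simp [hb x hx, Submodule.comap_bot, Submodule.ker_subtype]⟩
  left_cont := by
    intro x
    show (F.filt x).comap U.subtype = _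
    rw [F.left_cont x]
    ext m
    simp [Submodule.mem_iInf]

end RFiltration

namespace RFiltration

variable {k V W : Type*} [Field k] [AddCommGroup V] [Module k V]
  [AddCommGroup W] [Module k W]

lemma ext' {F G : RFiltration k V} (h : F.filt = G.filt) : F = G := by
  cases F; cases G; cases h; rfl

lemma plus_le_filt (F : RFiltration k V) (x : ℝ) : F.plus x ≤ F.filt x :=
  iSup_le fun y => F.antitone' (le_of_lt y.2)

lemma grDim_eq_sub [FiniteDimensional k V] (F : RFiltration k V) (x : ℝ) :
    F.grDim x = finrank k (F.filt x) - finrank k (F.plus x) := by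
  have h := Submodule.finrank_quotient_add_finrank ((F.plus x).comap (F.filt x).subtype)
  have h2 : finrank k ((F.plus x).comap (F.filt x).subtype) = finrank k (F.plus x) :=
    (Submodule.comapSubtypeEquivOfLe (F.plus_le_filt x)).finrank_eq
  unfold grDim
  omega

noncomputable def mapF (A : V ≃ₗ[k] W) (F : RFiltration k V) : RFiltration k W where
  filt x := (F.filt x).map A.toLinearMap
  antitone' := fun _ _ hab => Submodule.map_mono (F.antitone' hab)
  eventually_top := by
    obtain ⟨a, ha⟩ := F.eventually_top
    exact ⟨a, fun x hx => by simp [ha x hx]⟩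
  eventually_bot := by
    obtain ⟨b, hb⟩ := F.eventually_bot
    exact ⟨b, fun x hx => by simp [hb x hx]⟩
  left_cont := by
    intro x
    have hmm : ∀ p : Submodule k V, p.map A.toLinearMap = p.comap A.symm.toLinearMap := by
      intro p
      rw [← Submodule.map_equiv_eq_comap_symm]
    show (F.filt x).map A.toLinearMap = ⨅ y : {y : ℝ // y < x}, (F.filt y.1).map A.toLinearMap
    conv_lhs => rw [F.left_cont x]
    rw [hmm, Submodule.comap_iInf]
    exact iInf_congr fun y => (hmm (F.filt y.1)).symm

lemma mapF_filt (A : V ≃ₗ[k] W) (F : RFiltration k V) (x : ℝ) :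
    (F.mapF A).filt x = (F.filt x).map A.toLinearMap := rfl

lemma mapF_plus (A : V ≃ₗ[k] W) (F : RFiltration k V) (x : ℝ) :
    (F.mapF A).plus x = (F.plus x).map A.toLinearMap := by
  unfold plus
  rw [Submodule.map_iSup]
  rfl

lemma grDim_mapF [FiniteDimensional k V] [FiniteDimensional k W]
    (A : V ≃ₗ[k] W) (F : RFiltration k V) (x : ℝ) :
    (F.mapF A).grDim x = F.grDim x := by
  rw [grDim_eq_sub, grDim_eq_sub, mapF_filt, mapF_plus]
  rw [show (F.filt x).map A.toLinearMap = (F.filt x).map (A : V →ₗ[k] W) from rfl]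
  rw [show (F.plus x).map A.toLinearMap = (F.plus x).map (A : V →ₗ[k] W) from rfl]
  rw [LinearEquiv.finrank_map_eq, LinearEquiv.finrank_map_eq]

lemma induced_mapF (A : V ≃ₗ[k] V) (F : RFiltration k V) (U : Submodule k V)
    (hU : U.map (A : V →ₗ[k] V) = U) :
    ((F.mapF A).induced U) = (F.induced U).mapF (LinearEquiv.ofSubmodules A U U hU) := by
  apply ext'
  funext x
  ext u
  constructor
  · intro hu
    -- hu : (u : V) ∈ (F.filt x).map A
    obtain ⟨u', hu', huu⟩ := hu
    have hu'U : u' ∈ U := by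
      have : (u : V) ∈ U.map (A : V →ₗ[k] V) := hU.symm ▸ u.2
      obtain ⟨u₂, hu₂, huu₂⟩ := this
      have : u₂ = u' := A.injective (show A u₂ = A u' from huu₂.trans huu.symm)
      rwa [← this]
    refine ⟨⟨u', hu'U⟩, hu', ?_⟩
    exact Subtype.ext huu
  · rintro ⟨u', hu', rfl⟩
    exact ⟨u', hu', rfl⟩

end RFiltration



section Helpers
variable {K V : Type*} [Field K] [AddCommGroup V] [Module K V]

lemma exists_compl_le {p q : Submodule K V} (hpq : p ≤ q) :
    ∃ r, r ≤ q ∧ p ⊓ r = ⊥ ∧ p ⊔ r = q := by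
  obtain ⟨c, hc⟩ := Submodule.exists_isCompl (p.comap q.subtype)
  have h1 : (p.comap q.subtype).map q.subtype = p := by
    rw [Submodule.map_comap_subtype]
    exact inf_eq_right.mpr hpq
  refine ⟨c.map q.subtype, Submodule.map_subtype_le q c, ?_, ?_⟩
  · rw [← h1, ← Submodule.map_inf q.subtype (Submodule.injective_subtype q),
      hc.inf_eq_bot, Submodule.map_bot]
  · rw [← h1, ← Submodule.map_sup, hc.sup_eq_top, Submodule.map_top,
      Submodule.range_subtype]

lemma inf_span_singleton {U : Submodule K V} {v : V} (hv : v ∉ U) :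
    U ⊓ Submodule.span K {v} = ⊥ := by
  rw [eq_bot_iff]
  rintro u hu
  rw [Submodule.mem_inf] at hu
  obtain ⟨hu1, hu2⟩ := hu
  obtain ⟨c, rfl⟩ := Submodule.mem_span_singleton.mp hu2
  rcases eq_or_ne c 0 with rfl | hc
  · simp
  · exact absurd (by simpa [smul_smul, inv_mul_cancel₀ hc] using U.smul_mem c⁻¹ hu1) hv

lemma exists_min_on_Iio [FiniteDimensional K V] {c : ℝ → Submodule K V}
    (hc : Antitone c) (x : ℝ) : ∃ y < x, ∀ z < x, c y ≤ c z := by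
  have hne : {n : ℕ | ∃ y, y < x ∧ finrank K (c y) = n}.Nonempty :=
    ⟨_, x - 1, by linarith, rfl⟩
  obtain ⟨y₀, hy₀, hy₀r⟩ := Nat.sInf_mem hne
  refine ⟨y₀, hy₀, fun z hz => ?_⟩
  have h1 : c (max y₀ z) ≤ c y₀ := hc (le_max_left _ _)
  have h2 : c (max y₀ z) = c y₀ := by
    apply Submodule.eq_of_le_of_finrank_le h1
    rw [hy₀r]
    exact Nat.sInf_le ⟨max y₀ z, max_lt hy₀ hz, rfl⟩
  calc c y₀ = c (max y₀ z) := h2.symm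
    _ ≤ c z := hc (le_max_right _ _)

lemma iInf_lt_eq [FiniteDimensional K V] {c : ℝ → Submodule K V} (hc : Antitone c) (x : ℝ) :
    ∃ y, y < x ∧ (⨅ z : {z : ℝ // z < x}, c z.1) = c y := by
  obtain ⟨y, hy, hmin⟩ := exists_min_on_Iio hc x
  exact ⟨y, hy, le_antisymm (iInf_le _ (⟨y, hy⟩ : {z : ℝ // z < x})) (le_iInf fun z => hmin z z.2)⟩

lemma comap_subtype_inf_eq (U N : Submodule K V) :
    N.comap U.subtype = (N ⊓ U).comap U.subtype := by
  ext u
  simp [u.2]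

lemma finrank_comap_subtype [FiniteDimensional K V] (U N : Submodule K V) :
    finrank K (N.comap U.subtype) = finrank K ↥(N ⊓ U) := by
  rw [comap_subtype_inf_eq]
  exact (Submodule.comapSubtypeEquivOfLe inf_le_right).finrank_eq

lemma card_split {α : Type*} [Finite α] (p q : α → Prop) :
    Nat.card {a // p a} = Nat.card {a // p a ∧ q a} + Nat.card {a // p a ∧ ¬ q a} := by
  classical
  have : Fintype α := Fintype.ofFinite α
  rw [Nat.card_eq_fintype_card, Nat.card_eq_fintype_card, Nat.card_eq_fintype_card,
    Fintype.card_subtype, Fintype.card_subtype, Fintype.card_subtype]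
  rw [← Finset.filter_filter, ← Finset.filter_filter]
  exact (Finset.card_filter_add_card_filter_not (s := Finset.univ.filter p) q).symm

lemma card_congr_iff {α : Type*} {p q : α → Prop} (h : ∀ a, p a ↔ q a) :
    Nat.card {a // p a} = Nat.card {a // q a} :=
  Nat.card_congr (Equiv.subtypeEquivRight h)

end Helpers

section Coord
open Submodule Module
variable {K : Type*} [Field K] {d : ℕ}

def coordSet (K : Type*) [Field K] {d : ℕ} (S : Set (Fin d)) : Submodule K (Fin d → K) where
  carrier := {f | ∀ j ∉ S, f j = 0}
  add_mem' := fun hf hg j hj => by simp [Pi.add_apply, hf j hj, hg j hj]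
  zero_mem' := fun j _ => rfl
  smul_mem' := fun c f hf j hj => by simp [Pi.smul_apply, hf j hj]

lemma mem_coordSet {S : Set (Fin d)} {f : Fin d → K} :
    f ∈ coordSet K S ↔ ∀ j ∉ S, f j = 0 := Iff.rfl

lemma coordSet_mono {S T : Set (Fin d)} (h : S ⊆ T) : coordSet K S ≤ coordSet K T :=
  fun f hf j hj => hf j (fun hS => hj (h hS))

lemma coordSet_congr {S T : Set (Fin d)} (h : ∀ j, j ∈ S ↔ j ∈ T) :
    coordSet K S = coordSet K T := by
  have : S = T := Set.ext h
  rw [this]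

lemma coordSet_inf (S T : Set (Fin d)) :
    coordSet K S ⊓ coordSet K T = coordSet K (S ∩ T) := by
  ext f
  simp only [Submodule.mem_inf, mem_coordSet]
  constructor
  · rintro ⟨h1, h2⟩ j hj
    by_cases hS : j ∈ S
    · exact h2 j (fun hT => hj ⟨hS, hT⟩)
    · exact h1 j hS
  · intro h
    exact ⟨fun j hj => h j (fun hi => hj hi.1), fun j hj => h j (fun hi => hj hi.2)⟩

lemma coordSet_univ : coordSet K (Set.univ : Set (Fin d)) = ⊤ := by
  rw [eq_top_iff]
  intro f _ j hj
  exact absurd (Set.mem_univ j) hj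

lemma coordSet_empty : coordSet K (∅ : Set (Fin d)) = ⊥ := by
  rw [eq_bot_iff]
  intro f hf
  have : f = 0 := funext fun j => hf j (Set.notMem_empty j)
  simp [this]

lemma coordSet_eq_span (S : Set (Fin d)) :
    coordSet K S = span K ((fun j : Fin d => Pi.single j (1 : K)) '' S) := by
  apply le_antisymm
  · intro f hf
    classical
    have hrepr : f = ∑ j : Fin d, f j • (Pi.single j (1 : K) : Fin d → K) := by
      funext c
      rw [Finset.sum_apply]
      simp only [Pi.smul_apply, Pi.single_apply, smul_eq_mul, mul_ite, mul_one, mul_zero]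
      rw [Finset.sum_ite_eq Finset.univ c (fun j => f j)]
      simp
    rw [hrepr]
    apply Submodule.sum_mem
    intro j _
    by_cases hj : j ∈ S
    · exact Submodule.smul_mem _ _ (Submodule.subset_span ⟨j, hj, rfl⟩)
    · rw [hf j hj]
      simp
  · rw [Submodule.span_le]
    rintro f ⟨j, hj, rfl⟩
    intro c hc
    exact Pi.single_eq_of_ne (fun hcj : c = j => hc (by rw [hcj]; exact hj)) 1

lemma finrank_coordSet (S : Set (Fin d)) :
    finrank K (coordSet K S) = Nat.card S := by
  classical
  have hli : LinearIndependent K (fun j : S => (Pi.single (j : Fin d) (1 : K) : Fin d → K)) := by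
    have := (Pi.basisFun K (Fin d)).linearIndependent
    have h2 := this.comp (fun j : S => (j : Fin d)) Subtype.val_injective
    convert h2 using 1
    funext j
    simp [Pi.basisFun_apply]
  have hrange : Set.range (fun j : S => (Pi.single (j : Fin d) (1 : K) : Fin d → K)) =
      (fun j : Fin d => Pi.single j (1 : K)) '' S := by
    ext f
    constructor
    · rintro ⟨j, rfl⟩; exact ⟨j.1, j.2, rfl⟩
    · rintro ⟨j, hj, rfl⟩; exact ⟨⟨j, hj⟩, rfl⟩
  rw [coordSet_eq_span, ← hrange, finrank_span_eq_card hli, Nat.card_eq_fintype_card]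

lemma exists_lowerBound {ι : Type*} [Finite ι] (w : ι → ℝ) (a : ℝ) :
    ∃ a' : ℝ, a' ≤ a ∧ ∀ j, a' ≤ w j := by
  obtain ⟨M, hM⟩ := Finite.exists_le (fun j => -(w j))
  exact ⟨min a (-M), min_le_left _ _, fun j => le_trans (min_le_right _ _) (by linarith [hM j])⟩

lemma exists_upperBound {ι : Type*} [Finite ι] (w : ι → ℝ) (b : ℝ) :
    ∃ b' : ℝ, b ≤ b' ∧ ∀ j, w j ≤ b' := by
  obtain ⟨M, hM⟩ := Finite.exists_le w
  exact ⟨max b M, le_max_left _ _, fun j => le_trans (hM j) (le_max_right _ _)⟩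

lemma exists_witness_lt (w : Fin d → ℝ) (x : ℝ) :
    ∃ y, y < x ∧ ∀ j, (y ≤ w j ↔ x ≤ w j) := by
  classical
  set T := (Finset.univ.image w).filter (· < x) with hT
  by_cases hne : T.Nonempty
  · have hmax : T.max' hne < x := (Finset.mem_filter.mp (T.max'_mem hne)).2
    refine ⟨(T.max' hne + x)/2, by linarith, fun j => ?_⟩
    constructor
    · intro hyw
      by_contra hxw
      push_neg at hxw
      have hmem : w j ∈ T := Finset.mem_filter.mpr
        ⟨Finset.mem_image_of_mem w (Finset.mem_univ j), hxw⟩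
      have := T.le_max' _ hmem
      linarith
    · intro hxw; linarith
  · refine ⟨x - 1, by linarith, fun j => ?_⟩
    have hxw : x ≤ w j := by
      by_contra hc
      push_neg at hc
      exact hne ⟨w j, Finset.mem_filter.mpr ⟨Finset.mem_image_of_mem w (Finset.mem_univ j), hc⟩⟩
    constructor
    · intro _; exact hxw
    · intro _; linarith

lemma exists_witness_gt (w : Fin d → ℝ) (x : ℝ) :
    ∃ y, x < y ∧ ∀ j, (y ≤ w j ↔ x < w j) := by
  classical
  set T := (Finset.univ.image w).filter (x < ·) with hT
  by_cases hne : T.Nonempty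
  · have hmin : x < T.min' hne := (Finset.mem_filter.mp (T.min'_mem hne)).2
    refine ⟨T.min' hne, hmin, fun j => ?_⟩
    constructor
    · intro hyw; linarith
    · intro hxw
      exact T.min'_le _ (Finset.mem_filter.mpr ⟨Finset.mem_image_of_mem w (Finset.mem_univ j), hxw⟩)
  · refine ⟨x + 1, by linarith, fun j => ?_⟩
    have hxw : ¬ x < w j := fun hc =>
      hne ⟨w j, Finset.mem_filter.mpr ⟨Finset.mem_image_of_mem w (Finset.mem_univ j), hc⟩⟩
    constructor
    · intro hyw; linarith [hxw]; 
    · intro hc; exact absurd hc hxw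

noncomputable def ofWeights (K : Type*) [Field K] {d : ℕ} (w : Fin d → ℝ) :
    RFiltration K (Fin d → K) where
  filt x := coordSet K {j | x ≤ w j}
  antitone' := fun a b hab => coordSet_mono (fun j (hj : b ≤ w j) => le_trans hab hj)
  eventually_top := by
    obtain ⟨a, _, ha⟩ := exists_lowerBound w 0
    refine ⟨a, fun x hx => ?_⟩
    rw [← coordSet_univ]
    exact coordSet_congr fun j => by simp [le_trans hx (ha j)]
  eventually_bot := by
    obtain ⟨b, _, hb⟩ := exists_upperBound w 0
    refine ⟨b + 1, fun x hx => ?_⟩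
    rw [← coordSet_empty]
    refine coordSet_congr fun j => ?_
    simp only [Set.mem_setOf_eq, Set.mem_empty_iff_false, iff_false]
    intro hc
    linarith [hb j]
  left_cont := by
    intro x
    obtain ⟨y, hy, hiff⟩ := exists_witness_lt w x
    apply le_antisymm
    · exact le_iInf fun z => coordSet_mono fun j hj => le_trans (le_of_lt z.2) hj
    · refine le_trans (iInf_le _ ⟨y, hy⟩) (le_of_eq ?_)
      exact coordSet_congr fun j => hiff j

lemma ofWeights_filt (w : Fin d → ℝ) (x : ℝ) :
    (ofWeights K w).filt x = coordSet K {j | x ≤ w j} := rfl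

lemma ofWeights_plus (w : Fin d → ℝ) (x : ℝ) :
    (ofWeights K w).plus x = coordSet K {j | x < w j} := by
  obtain ⟨y, hy, hiff⟩ := exists_witness_gt w x
  apply le_antisymm
  · exact iSup_le fun z => coordSet_mono fun j hj => lt_of_lt_of_le z.2 hj
  · refine le_trans (le_of_eq ?_) (le_iSup (fun z : {z : ℝ // x < z} => (ofWeights K w).filt z.1) ⟨y, hy⟩)
    exact coordSet_congr fun j => (hiff j).symm

lemma ofWeights_induced_plus (w : Fin d → ℝ) (U : Submodule K (Fin d → K)) (x : ℝ) :
    ((ofWeights K w).induced U).plus x = (coordSet K {j | x < w j}).comap U.subtype := by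
  obtain ⟨y, hy, hiff⟩ := exists_witness_gt w x
  apply le_antisymm
  · exact iSup_le fun z => Submodule.comap_mono (coordSet_mono fun j hj => lt_of_lt_of_le z.2 hj)
  · refine le_trans (le_of_eq ?_)
      (le_iSup (fun z : {z : ℝ // x < z} => ((ofWeights K w).induced U).filt z.1) ⟨y, hy⟩)
    show (coordSet K {j | x < w j}).comap U.subtype = (coordSet K {j | y ≤ w j}).comap U.subtype
    exact congrArg (Submodule.comap U.subtype) (coordSet_congr fun j => (hiff j).symm)

lemma grDim_ofWeights (w : Fin d → ℝ) (x : ℝ) :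
    (ofWeights K w).grDim x = Nat.card {j // w j = x} := by
  rw [RFiltration.grDim_eq_sub, ofWeights_plus, ofWeights_filt, finrank_coordSet, finrank_coordSet]
  have hsplit := card_split (α := Fin d) (fun j => x ≤ w j) (fun j => w j = x)
  have h1 : Nat.card {j // x ≤ w j ∧ w j = x} = Nat.card {j // w j = x} :=
    card_congr_iff fun j => ⟨fun hj => hj.2, fun hj => ⟨le_of_eq hj.symm, hj⟩⟩
  have h2 : Nat.card {j // x ≤ w j ∧ ¬ w j = x} = Nat.card {j // x < w j} :=
    card_congr_iff fun j => ⟨fun hj => lt_of_le_of_ne hj.1 (Ne.symm hj.2),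
      fun hj => ⟨le_of_lt hj, fun hc => absurd hc (ne_of_gt hj)⟩⟩
  have hc1 : Nat.card {j // j ∈ {j | x ≤ w j}} = Nat.card {j // x ≤ w j} := rfl
  have hc2 : Nat.card {j // j ∈ {j | x < w j}} = Nat.card {j // x < w j} := rfl
  rw [hc1, hc2]  -- may be unnecessary
  omega

lemma grDim_induced_ofWeights (w : Fin d → ℝ) (S₀ : Set (Fin d)) (x : ℝ) :
    ((ofWeights K w).induced (coordSet K S₀)).grDim x = Nat.card {j // w j = x ∧ j ∈ S₀} := by
  rw [RFiltration.grDim_eq_sub, ofWeights_induced_plus]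
  show finrank K ((coordSet K {j | x ≤ w j}).comap (coordSet K S₀).subtype) -
      finrank K ((coordSet K {j | x < w j}).comap (coordSet K S₀).subtype) = _
  rw [finrank_comap_subtype, finrank_comap_subtype, coordSet_inf, coordSet_inf,
    finrank_coordSet, finrank_coordSet]
  have hsplit := card_split (α := Fin d) (fun j => x ≤ w j ∧ j ∈ S₀) (fun j => w j = x)
  have h1 : Nat.card {j // (x ≤ w j ∧ j ∈ S₀) ∧ w j = x} = Nat.card {j // w j = x ∧ j ∈ S₀} :=
    card_congr_iff fun j => ⟨fun hj => ⟨hj.2, hj.1.2⟩, fun hj => ⟨⟨le_of_eq hj.1.symm, hj.2⟩, hj.1⟩⟩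
  have h2 : Nat.card {j // (x ≤ w j ∧ j ∈ S₀) ∧ ¬ w j = x} = Nat.card {j // x < w j ∧ j ∈ S₀} :=
    card_congr_iff fun j => ⟨fun hj => ⟨lt_of_le_of_ne hj.1.1 (Ne.symm hj.2), hj.1.2⟩,
      fun hj => ⟨⟨le_of_lt hj.1, hj.2⟩, fun hc => absurd hc (ne_of_gt hj.1)⟩⟩
  have hc1 : Nat.card ({j | x ≤ w j} ∩ S₀ : Set (Fin d)) = Nat.card {j // x ≤ w j ∧ j ∈ S₀} := rfl
  have hc2 : Nat.card ({j | x < w j} ∩ S₀ : Set (Fin d)) = Nat.card {j // x < w j ∧ j ∈ S₀} := rfl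
  rw [hc1, hc2]
  omega

end Coord

section Combinatorics
open Submodule Module

def sigmaFiber {α : Type*} (β : α → Type*) (a₀ : α) :
    {t : Σ a : α, β a // t.1 = a₀} ≃ β a₀ where
  toFun t := t.2 ▸ t.1.2
  invFun b := ⟨⟨a₀, b⟩, rfl⟩
  left_inv := by rintro ⟨⟨a, b⟩, rfl⟩; rfl
  right_inv b := rfl

lemma realize_weights (f : ℝ → ℕ) (hf : (Function.support f).Finite) (n : ℕ)
    (hsum : ∑ᶠ x, f x = n) :
    ∃ w : Fin n → ℝ, ∀ x, Nat.card {j // w j = x} = f x := by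
  classical
  set s := hf.toFinset with hs
  have hcard : Fintype.card ((y : s) × Fin (f y.1)) = n := by
    rw [Fintype.card_sigma]
    simp only [Fintype.card_fin]
    rw [← hsum, finsum_eq_sum f hf]
    exact Finset.sum_coe_sort s f
  have e : Fin n ≃ (y : s) × Fin (f y.1) :=
    Fintype.equivOfCardEq (by rw [hcard, Fintype.card_fin])
  refine ⟨fun j => ((e j).1 : ℝ), fun x => ?_⟩
  have h1 : Nat.card {j : Fin n // ((e j).1 : ℝ) = x} =
      Nat.card {t : (y : s) × Fin (f y.1) // (t.1 : ℝ) = x} :=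
    Nat.card_congr (e.subtypeEquiv (fun j => Iff.rfl))
  rw [h1]
  by_cases hx : x ∈ s
  · have h2 : Nat.card {t : (y : s) × Fin (f y.1) // (t.1 : ℝ) = x} =
        Nat.card {t : (y : s) × Fin (f y.1) // t.1 = (⟨x, hx⟩ : s)} :=
      card_congr_iff fun t => by
        constructor
        · intro ht; exact Subtype.ext ht
        · intro ht; rw [ht]
    rw [h2, Nat.card_congr (sigmaFiber (fun y : s => Fin (f y.1)) ⟨x, hx⟩)]
    simp
  · have hempty : IsEmpty {t : (y : s) × Fin (f y.1) // (t.1 : ℝ) = x} := by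
      refine ⟨fun t => hx ?_⟩
      rw [← t.2]
      exact t.1.1.2
    rw [Nat.card_of_isEmpty]
    have : f x = 0 := by
      by_contra hc
      exact hx (hf.mem_toFinset.mpr hc)
    omega

lemma exists_perm_fibers {α β : Type*} [Fintype α] (f f' : α → β)
    (hc : ∀ b, Nat.card {a // f a = b} = Nat.card {a // f' a = b}) :
    ∃ σ : Equiv.Perm α, ∀ a, f (σ a) = f' a := by
  classical
  have he : ∀ b, Nonempty ({a // f' a = b} ≃ {a // f a = b}) := fun b =>
    ⟨Fintype.equivOfCardEq (by
      have := hc b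
      rw [Nat.card_eq_fintype_card, Nat.card_eq_fintype_card] at this
      omega)⟩
  let e : ∀ b, {a // f' a = b} ≃ {a // f a = b} := fun b => (he b).some
  let σ : α ≃ α := (Equiv.sigmaFiberEquiv f').symm.trans
    ((Equiv.sigmaCongrRight e).trans (Equiv.sigmaFiberEquiv f))
  refine ⟨σ, fun a => ?_⟩
  show f ((Equiv.sigmaFiberEquiv f) ((Equiv.sigmaCongrRight e) ((Equiv.sigmaFiberEquiv f').symm a))) = f' a
  simp only [Equiv.sigmaFiberEquiv, Equiv.sigmaCongrRight, Equiv.coe_fn_mk, Equiv.coe_fn_symm_mk]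
  exact (e (f' a) ⟨a, rfl⟩).2

lemma card_fin_lt {d : ℕ} (i : ℕ) (hi : i ≤ d) :
    Nat.card {j : Fin d // (j : ℕ) < i} = i := by
  have e : {j : Fin d // (j : ℕ) < i} ≃ Fin i :=
    ⟨fun j => ⟨j.1, j.2⟩, fun j => ⟨⟨j.1, lt_of_lt_of_le j.2 hi⟩, j.2⟩,
      fun j => by apply Subtype.ext; apply Fin.ext; rfl, fun j => rfl⟩
  rw [Nat.card_congr e]
  simp

end Combinatorics

section Combinatorics2
open Submodule Module

lemma realize_pair {d i : ℕ} (hid : i ≤ d) (g h : ℝ → ℕ) (hg : (Function.support g).Finite)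
    (hgs : ∑ᶠ x, g x = d) (hle : ∀ x, h x ≤ g x) (hhs : ∑ᶠ x, h x = i) :
    ∃ w : Fin d → ℝ, ∀ x, Nat.card {j : Fin d // w j = x} = g x ∧
      Nat.card {j : Fin d // w j = x ∧ (j : ℕ) < i} = h x := by
  classical
  have hhsupp : (Function.support h).Finite :=
    hg.subset (fun x hx (hc : g x = 0) => hx (Nat.le_zero.mp (hc ▸ hle x)))
  have hg'supp : (Function.support (fun x => g x - h x)).Finite :=
    hg.subset (fun x hx => by
      simp only [Function.mem_support] at hx ⊢
      have := hle x
      omega)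
  have hg's : ∑ᶠ x, (g x - h x) = d - i := by
    have hgsum : ∑ x ∈ hg.toFinset, g x = d := by rw [← finsum_eq_sum g hg, hgs]
    have hhsum : ∑ x ∈ hg.toFinset, h x = i := by
      rw [← finsum_eq_finset_sum_of_support_subset h (s := hg.toFinset)
        (fun x hx => by
          rw [Set.Finite.coe_toFinset]
          exact fun (hc : g x = 0) => hx (Nat.le_zero.mp (hc ▸ hle x))), hhs]
    have hdsum : ∑ x ∈ hg.toFinset, ((g x - h x) + h x) = ∑ x ∈ hg.toFinset, g x :=
      Finset.sum_congr rfl (fun x _ => Nat.sub_add_cancel (hle x))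
    rw [Finset.sum_add_distrib] at hdsum
    rw [finsum_eq_finset_sum_of_support_subset _ (s := hg.toFinset)
      (fun x hx => by
        rw [Set.Finite.coe_toFinset]
        simp only [Function.mem_support] at hx
        have := hle x
        exact fun (hc : g x = 0) => hx (by omega))]
    omega
  obtain ⟨w₁, hw₁⟩ := realize_weights h hhsupp i hhs
  obtain ⟨w₂, hw₂⟩ := realize_weights (fun x => g x - h x) hg'supp (d - i) hg's
  -- total extensions
  set u₁ : ℕ → ℝ := fun n => if hn : n < i then w₁ ⟨n, hn⟩ else 0 with hu₁
  set u₂ : ℕ → ℝ := fun n => if hn : n < d - i then w₂ ⟨n, hn⟩ else 0 with hu₂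
  set w : Fin d → ℝ := fun j => if (j : ℕ) < i then u₁ (j : ℕ) else u₂ ((j : ℕ) - i) with hwdef
  have hval1 : ∀ (j : Fin d) (hj : (j : ℕ) < i), w j = w₁ ⟨(j : ℕ), hj⟩ := by
    intro j hj
    rw [hwdef]
    show (if (j : ℕ) < i then u₁ (j : ℕ) else u₂ ((j : ℕ) - i)) = _
    rw [if_pos hj, hu₁]
    show (if hn : (j : ℕ) < i then w₁ ⟨(j : ℕ), hn⟩ else 0) = _
    rw [dif_pos hj]
  have hval2 : ∀ (j : Fin d) (hj : ¬ (j : ℕ) < i) (hj2 : (j : ℕ) - i < d - i),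
      w j = w₂ ⟨(j : ℕ) - i, hj2⟩ := by
    intro j hj hj2
    rw [hwdef]
    show (if (j : ℕ) < i then u₁ (j : ℕ) else u₂ ((j : ℕ) - i)) = _
    rw [if_neg hj, hu₂]
    show (if hn : (j : ℕ) - i < d - i then w₂ ⟨(j : ℕ) - i, hn⟩ else 0) = _
    rw [dif_pos hj2]
  refine ⟨w, fun x => ?_⟩
  have E1 : {j : Fin d // w j = x ∧ (j : ℕ) < i} ≃ {j₁ : Fin i // w₁ j₁ = x} :=
    { toFun := fun j => ⟨⟨(j.1 : ℕ), j.2.2⟩, by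
        have hj := j.2.1
        rwa [hval1 j.1 j.2.2] at hj⟩
      invFun := fun j₁ => ⟨⟨(j₁.1 : ℕ), lt_of_lt_of_le j₁.1.2 hid⟩, by
        refine ⟨?_, j₁.1.2⟩
        rw [hval1 _ j₁.1.2]
        have heq : (⟨(j₁.1 : ℕ), j₁.1.2⟩ : Fin i) = j₁.1 := by apply Fin.ext; rfl
        rw [heq]
        exact j₁.2⟩
      left_inv := fun j => by apply Subtype.ext; apply Fin.ext; rfl
      right_inv := fun j₁ => by apply Subtype.ext; apply Fin.ext; rfl }
  have E2 : {j : Fin d // w j = x ∧ ¬ (j : ℕ) < i} ≃ {j₂ : Fin (d - i) // w₂ j₂ = x} :=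
    { toFun := fun j => ⟨⟨(j.1 : ℕ) - i, by have := j.1.2; have := j.2.2; omega⟩, by
        have hj := j.2.1
        rwa [hval2 j.1 j.2.2 (by have := j.1.2; have := j.2.2; omega)] at hj⟩
      invFun := fun j₂ => ⟨⟨(j₂.1 : ℕ) + i, by have := j₂.1.2; omega⟩, by
        have hni : ¬ ((⟨(j₂.1 : ℕ) + i, by have := j₂.1.2; omega⟩ : Fin d) : ℕ) < i := by
          show ¬ ((j₂.1 : ℕ) + i < i)
          omega
        refine ⟨?_, hni⟩
        rw [hval2 _ hni (by show (j₂.1 : ℕ) + i - i < d - i; have := j₂.1.2; omega)]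
        have heq : (⟨((⟨(j₂.1 : ℕ) + i, by have := j₂.1.2; omega⟩ : Fin d) : ℕ) - i,
            by show (j₂.1 : ℕ) + i - i < d - i; have := j₂.1.2; omega⟩ : Fin (d - i)) = j₂.1 := by
          apply Fin.ext
          show (j₂.1 : ℕ) + i - i = (j₂.1 : ℕ)
          omega
        rw [heq]
        exact j₂.2⟩
      left_inv := fun j => by
        apply Subtype.ext; apply Fin.ext
        show ((j.1 : ℕ) - i) + i = (j.1 : ℕ)
        have := j.2.2
        omega
      right_inv := fun j₂ => by
        apply Subtype.ext; apply Fin.ext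
        show ((j₂.1 : ℕ) + i) - i = (j₂.1 : ℕ)
        omega }
  have hcard1 : Nat.card {j : Fin d // w j = x ∧ (j : ℕ) < i} = h x := by
    rw [Nat.card_congr E1]; exact hw₁ x
  have hcard2 : Nat.card {j : Fin d // w j = x ∧ ¬ (j : ℕ) < i} = g x - h x := by
    rw [Nat.card_congr E2]; exact hw₂ x
  have hsplit := card_split (α := Fin d) (fun j => w j = x) (fun j => (j : ℕ) < i)
  have := hle x
  exact ⟨by omega, hcard1⟩

lemma exists_perm_of_counts {d i : ℕ} (w w' : Fin d → ℝ)
    (hgc : ∀ x, Nat.card {j : Fin d // w j = x} = Nat.card {j : Fin d // w' j = x})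
    (hhc : ∀ x, Nat.card {j : Fin d // w j = x ∧ (j : ℕ) < i} =
      Nat.card {j : Fin d // w' j = x ∧ (j : ℕ) < i}) :
    ∃ σ : Equiv.Perm (Fin d), (∀ j, w (σ j) = w' j) ∧
      (∀ j, ((σ j : ℕ) < i ↔ (j : ℕ) < i)) := by
  have key : ∀ (P : Prop) (x : ℝ) (v : Fin d → ℝ),
      (P → Nat.card {j : Fin d // ((((j : ℕ) < i : Prop), v j) = (P, x))} =
        Nat.card {j : Fin d // v j = x ∧ (j : ℕ) < i}) ∧
      (¬ P → Nat.card {j : Fin d // ((((j : ℕ) < i : Prop), v j) = (P, x))} =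
        Nat.card {j : Fin d // v j = x ∧ ¬ (j : ℕ) < i}) := by
    intro P x v
    constructor
    · intro hP
      apply card_congr_iff
      intro j
      rw [Prod.mk.injEq, eq_iff_iff]
      constructor
      · rintro ⟨h1, h2⟩; exact ⟨h2, h1.mpr hP⟩
      · rintro ⟨h1, h2⟩; exact ⟨⟨fun _ => hP, fun _ => h2⟩, h1⟩
    · intro hP
      apply card_congr_iff
      intro j
      rw [Prod.mk.injEq, eq_iff_iff]
      constructor
      · rintro ⟨h1, h2⟩; exact ⟨h2, fun hc => hP (h1.mp hc)⟩
      · rintro ⟨h1, h2⟩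
        exact ⟨⟨fun hc => absurd hc h2, fun hc => absurd hc hP⟩, h1⟩
  obtain ⟨σ, hσ⟩ := exists_perm_fibers (fun j : Fin d => ((((j : ℕ) < i : Prop), w j)))
    (fun j : Fin d => ((((j : ℕ) < i : Prop), w' j)))
    (by rintro ⟨P, x⟩
        by_cases hP : P
        · rw [(key P x w).1 hP, (key P x w').1 hP]
          exact hhc x
        · rw [(key P x w).2 hP, (key P x w').2 hP]
          have hs1 := card_split (α := Fin d) (fun j => w j = x) (fun j => (j : ℕ) < i)
          have hs2 := card_split (α := Fin d) (fun j => w' j = x) (fun j => (j : ℕ) < i)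
          have := hgc x
          have := hhc x
          omega)
  refine ⟨σ, fun j => congrArg Prod.snd (hσ j), fun j => ?_⟩
  have := congrArg Prod.fst (hσ j)
  simp only at this
  rw [eq_iff_iff] at this
  exact this

lemma map_funCongrLeft_coord {K : Type*} [Field K] {d : ℕ}
    (σ : Equiv.Perm (Fin d)) (S : Set (Fin d)) :
    (coordSet K S).map (LinearEquiv.funCongrLeft K K σ).toLinearMap
      = coordSet K (σ.symm '' S) := by
  ext g
  constructor
  · rintro ⟨f, hf, rfl⟩
    intro j hj
    show f (σ j) = 0
    apply hf
    intro hS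
    exact hj (Set.mem_image_equiv.mpr (by simpa using hS))
  · intro hg
    refine ⟨fun j' => g (σ.symm j'), fun j' hj' => ?_, ?_⟩
    · show g (σ.symm j') = 0
      apply hg
      intro hmem
      rw [Set.mem_image_equiv] at hmem
      simp only [Equiv.symm_symm] at hmem
      exact hj' (by simpa using hmem)
    · funext j
      show g (σ.symm (σ j)) = g j
      rw [Equiv.symm_apply_apply]

end Combinatorics2

section Adapt
open Submodule Module
variable {K V : Type*} [Field K] [AddCommGroup V] [Module K V]

lemma adapt_base [FiniteDimensional K V] (W : Submodule K V) (hW : finrank K W = 0)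
    (c : ℝ → Submodule K V) (hle : ∀ x, c x ≤ W) (U : Submodule K V) (hUW : U ≤ W) :
    ∃ (ι : Type) (_ : Fintype ι) (v : ι → V) (w : ι → ℝ) (S : Set ι),
      LinearIndependent K v ∧ U = span K (v '' S) ∧
      ∀ x, c x = span K (v '' {j | x ≤ w j}) := by
  have hWbot : W = ⊥ := Submodule.finrank_eq_zero.mp hW
  have himg : ∀ (S : Set Empty), ((Empty.elim : Empty → V) '' S) = (∅ : Set V) :=
    fun S => Set.eq_empty_iff_forall_notMem.mpr (by rintro y ⟨j, _, _⟩; exact j.elim)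
  refine ⟨Empty, inferInstance, Empty.elim, Empty.elim, ∅, linearIndependent_empty_type, ?_, ?_⟩
  · rw [himg, Submodule.span_empty]
    exact le_bot_iff.mp (hUW.trans hWbot.le)
  · intro x
    rw [himg, Submodule.span_empty]
    exact le_bot_iff.mp ((hle x).trans hWbot.le)

set_option maxHeartbeats 4000000 in
lemma adapt_aux [FiniteDimensional K V] (N : ℕ) :
    ∀ (W : Submodule K V), finrank K W ≤ N →
    ∀ (c : ℝ → Submodule K V), (∀ x, c x ≤ W) → Antitone c →
      (∀ x, c x = ⨅ y : {y : ℝ // y < x}, c y.1) →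
    ∀ a b : ℝ, (∀ x ≤ a, c x = W) → (∀ x, b ≤ x → c x = ⊥) →
    ∀ (U : Submodule K V), U ≤ W →
    ∃ (ι : Type) (_ : Fintype ι) (v : ι → V) (w : ι → ℝ) (S : Set ι),
      LinearIndependent K v ∧ U = span K (v '' S) ∧
      ∀ x, c x = span K (v '' {j | x ≤ w j}) := by
  induction N with
  | zero =>
    intro W hW c hle hanti hlc a b ha hb U hUW
    exact adapt_base W (Nat.le_zero.mp hW) c hle U hUW
  | succ N ih =>
    intro W hW c hle hanti hlc a b ha hb U hUW
    by_cases h0 : finrank K W = 0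
    · exact adapt_base W h0 c hle U hUW
    classical
    have hWne : W ≠ ⊥ := by
      intro hWb
      rw [hWb, finrank_bot] at h0
      exact h0 rfl
    set T : Set ℝ := {x | c x ≠ ⊥} with hT
    have hTne : T.Nonempty := ⟨a, by show c a ≠ ⊥; rw [ha a le_rfl]; exact hWne⟩
    have hTbdd : BddAbove T := ⟨b, fun x hx => by
      by_contra hcon
      push_neg at hcon
      exact hx (hb x hcon.le)⟩
    set x₀ := sSup T with hx₀
    have hx₀top : ∀ x, x₀ < x → c x = ⊥ := by
      intro x hx
      by_contra hcx
      exact absurd (le_csSup hTbdd hcx) (not_le.mpr hx)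
    have hx₀ne : c x₀ ≠ ⊥ := by
      obtain ⟨y, hy, hinf⟩ := iInf_lt_eq hanti x₀
      rw [hlc x₀, hinf]
      obtain ⟨t, htT, hyt⟩ := exists_lt_of_lt_csSup hTne hy
      intro hcy
      exact htT (le_bot_iff.mp (hcy ▸ hanti hyt.le))
    obtain ⟨v, hvc, hv0⟩ := Submodule.exists_mem_ne_zero_of_ne_bot hx₀ne
    have hvW : v ∈ W := hle x₀ hvc
    obtain ⟨U₀, hU₀U, hU₀v, hU₀case⟩ :
        ∃ U₀ : Submodule K V, U₀ ≤ U ∧ U₀ ⊓ span K {v} = ⊥ ∧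
          ((v ∈ U ∧ U₀ ⊔ span K {v} = U) ∨ (v ∉ U ∧ U₀ = U)) := by
      by_cases hvU : v ∈ U
      · obtain ⟨r, hr1, hr2, hr3⟩ := exists_compl_le (show span K {v} ≤ U from
          (span_le).mpr (Set.singleton_subset_iff.mpr hvU))
        exact ⟨r, hr1, by rwa [inf_comm] at hr2, Or.inl ⟨hvU, by rwa [sup_comm] at hr3⟩⟩
      · exact ⟨U, le_rfl, inf_span_singleton hvU, Or.inr ⟨hvU, rfl⟩⟩
    have hU₀W : U₀ ≤ W := hU₀U.trans hUW
    have hUsv : U₀ ⊔ span K {v} ≤ W :=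
      sup_le hU₀W ((span_le).mpr (Set.singleton_subset_iff.mpr hvW))
    obtain ⟨C, hCW, hCinf, hCsup⟩ := exists_compl_le hUsv
    set W' := U₀ ⊔ C with hW'
    have hW'W : W' ≤ W := sup_le hU₀W hCW
    have hU₀W' : U₀ ≤ W' := le_sup_left
    have hsupW : W' ⊔ span K {v} = W := by
      rw [hW', sup_right_comm]
      exact hCsup
    have hinfW : W' ⊓ span K {v} = ⊥ := by
      rw [eq_bot_iff]
      rintro z hz
      rw [Submodule.mem_inf] at hz
      obtain ⟨hz1, hz2⟩ := hz
      rw [hW', Submodule.mem_sup] at hz1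
      obtain ⟨u₀, hu₀, cc, hcc, rfl⟩ := hz1
      have hcmem : cc ∈ (U₀ ⊔ span K {v}) ⊓ C := by
        refine Submodule.mem_inf.mpr ⟨?_, hcc⟩
        have h1 : (u₀ + cc) ∈ U₀ ⊔ span K {v} := Submodule.mem_sup_right hz2
        have h2 : u₀ ∈ U₀ ⊔ span K {v} := Submodule.mem_sup_left hu₀
        have h3 : cc = (u₀ + cc) - u₀ := (add_sub_cancel_left u₀ cc).symm
        rw [h3]
        exact Submodule.sub_mem _ h1 h2
      rw [hCinf] at hcmem
      have hcc0 : cc = (0 : V) := hcmem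
      have : u₀ + cc ∈ U₀ ⊓ span K {v} := Submodule.mem_inf.mpr
        ⟨by rw [hcc0, add_zero]; exact hu₀, hz2⟩
      rw [hU₀v] at this
      exact this
    have hrank : finrank K W' + 1 = finrank K W := by
      have hh := Submodule.finrank_sup_add_finrank_inf_eq W' (span K {v})
      rw [hsupW, hinfW, finrank_span_singleton hv0] at hh
      have hfb : finrank K (⊥ : Submodule K V) = 0 := finrank_bot K V
      omega
    have hW'N : finrank K W' ≤ N := by omega
    set c' : ℝ → Submodule K V := fun x => c x ⊓ W' with hc'
    have hc'le : ∀ x, c' x ≤ W' := fun x => inf_le_right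
    have hc'anti : Antitone c' := fun p q hpq => inf_le_inf (hanti hpq) le_rfl
    have hc'lc : ∀ x, c' x = ⨅ y : {y : ℝ // y < x}, c' y.1 := by
      intro x
      have hne : Nonempty {y : ℝ // y < x} := ⟨⟨x - 1, by linarith⟩⟩
      show c x ⊓ W' = _
      rw [hlc x]
      exact iInf_inf
    have hc'top : ∀ x ≤ a, c' x = W' := fun x hx => by
      show c x ⊓ W' = W'
      rw [ha x hx]
      exact inf_eq_right.mpr hW'W
    have hc'bot : ∀ x, b ≤ x → c' x = ⊥ := fun x hx => by
      show c x ⊓ W' = ⊥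
      rw [hb x hx]
      exact bot_inf_eq _
    obtain ⟨ι', hι', v', w', S', hind', hU'eq, hfil'⟩ :=
      ih W' hW'N c' hc'le hc'anti hc'lc a b hc'top hc'bot (U ⊓ W') inf_le_right
    obtain ⟨a', ha'1, ha'2⟩ := exists_lowerBound w' a
    have hspan' : span K (Set.range v') = W' := by
      have h1 : c' a' = W' := hc'top a' ha'1
      have h2 : {j : ι' | a' ≤ w' j} = Set.univ := Set.eq_univ_of_forall (fun j => ha'2 j)
      have h3 := hfil' a'
      rw [h1, h2, Set.image_univ] at h3
      exact h3.symm
    have hvnW' : v ∉ W' := by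
      intro hvmem
      have : v ∈ W' ⊓ span K {v} := Submodule.mem_inf.mpr ⟨hvmem, mem_span_singleton_self v⟩
      rw [hinfW] at this
      exact hv0 this
    set vv : Option ι' → V := fun o => o.elim v v' with hvv
    set ww : Option ι' → ℝ := fun o => o.elim x₀ w' with hww
    have hli : LinearIndependent K vv := by
      rw [linearIndependent_option]
      constructor
      · exact hind'
      · show v ∉ span K (Set.range (vv ∘ some))
        have hre : Set.range (vv ∘ some) = Set.range v' := rfl
        rw [hre, hspan']
        exact hvnW'
    have hsplitc : ∀ x, x ≤ x₀ → c x = (c x ⊓ W') ⊔ span K {v} := by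
      intro x hx
      have hvcx : v ∈ c x := hanti hx hvc
      apply le_antisymm
      · intro u hu
        have huW : u ∈ W' ⊔ span K {v} := by rw [hsupW]; exact hle x hu
        rw [Submodule.mem_sup] at huW
        obtain ⟨u', hu', z, hz, rfl⟩ := huW
        have hzc : z ∈ c x := (span_le.mpr (Set.singleton_subset_iff.mpr hvcx)) hz
        have hu'c : u' ∈ c x := by
          have h4 : u' = (u' + z) - z := (add_sub_cancel_right u' z).symm
          rw [h4]
          exact Submodule.sub_mem _ hu hzc
        exact Submodule.mem_sup.mpr ⟨u', Submodule.mem_inf.mpr ⟨hu'c, hu'⟩, z, hz, rfl⟩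
      · exact sup_le inf_le_left (span_le.mpr (Set.singleton_subset_iff.mpr hvcx))
    refine ⟨Option ι', inferInstance, vv, ww,
      if v ∈ U then insert none (some '' S') else some '' S', hli, ?_, ?_⟩
    · rcases hU₀case with ⟨hvU, hsU⟩ | ⟨hvU, hU₀eq⟩
      · rw [if_pos hvU, Set.image_insert_eq, Set.image_image]
        have himg : (fun j => vv (some j)) '' S' = v' '' S' := rfl
        rw [himg, Submodule.span_insert, ← hU'eq]
        show U = span K {vv none} ⊔ (U ⊓ W')
        show U = span K {v} ⊔ (U ⊓ W')
        apply le_antisymm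
        · intro u hu
          rw [← hsU, Submodule.mem_sup] at hu
          obtain ⟨u₀, hu₀, z, hz, rfl⟩ := hu
          exact Submodule.add_mem _
            (Submodule.mem_sup_right (Submodule.mem_inf.mpr ⟨hU₀U hu₀, hU₀W' hu₀⟩))
            (Submodule.mem_sup_left hz)
        · exact sup_le (span_le.mpr (Set.singleton_subset_iff.mpr hvU)) inf_le_left
      · rw [if_neg hvU, Set.image_image]
        have himg : (fun j => vv (some j)) '' S' = v' '' S' := rfl
        rw [himg, ← hU'eq]
        have hUW' : U ≤ W' := hU₀eq ▸ hU₀W'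
        exact (inf_eq_left.mpr hUW').symm
    · intro x
      by_cases hx : x ≤ x₀
      · have hset : {o : Option ι' | x ≤ ww o} = insert none (some '' {j | x ≤ w' j}) := by
          ext o
          cases o with
          | none =>
            have h1 : (none : Option ι') ∈ insert none (some '' {j | x ≤ w' j}) :=
              Set.mem_insert _ _
            simp only [Set.mem_setOf_eq, h1, iff_true]
            exact hx
          | some j =>
            simp only [Set.mem_setOf_eq, Set.mem_insert_iff, Set.mem_image]
            constructor
            · intro hj; exact Or.inr ⟨j, hj, rfl⟩
            · rintro (hc | ⟨j', hj', hjj⟩)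
              · exact absurd hc (by simp)
              · have : j' = j := Option.some_injective _ hjj
                rwa [← this]
        rw [hset, Set.image_insert_eq, Set.image_image]
        have himg : (fun j => vv (some j)) '' {j | x ≤ w' j} = v' '' {j | x ≤ w' j} := rfl
        rw [himg, Submodule.span_insert, ← hfil' x]
        show c x = span K {v} ⊔ (c x ⊓ W')
        conv_lhs => rw [hsplitc x hx]
        exact sup_comm _ _
      · push_neg at hx
        have hcx : c x = ⊥ := hx₀top x hx
        have hset : {o : Option ι' | x ≤ ww o} = some '' {j | x ≤ w' j} := by
          ext o
          cases o with
          | none =>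
            simp only [Set.mem_setOf_eq, Set.mem_image]
            constructor
            · intro hc; exact absurd hc (not_le.mpr hx)
            · rintro ⟨j', _, hjj⟩; exact absurd hjj (by simp)
          | some j =>
            simp only [Set.mem_setOf_eq, Set.mem_image]
            constructor
            · intro hj; exact ⟨j, hj, rfl⟩
            · rintro ⟨j', hj', hjj⟩
              have : j' = j := Option.some_injective _ hjj
              rwa [← this]
        rw [hset, Set.image_image]
        have himg : (fun j => vv (some j)) '' {j | x ≤ w' j} = v' '' {j | x ≤ w' j} := rfl
        rw [himg, ← hfil' x]
        show c x = c x ⊓ W'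
        rw [hcx]
        exact (bot_inf_eq _).symm

end Adapt

section AdaptPack
open Submodule Module
variable {K : Type*} [Field K] {d : ℕ}

set_option maxHeartbeats 1000000 in
lemma adapt (F : RFiltration K (Fin d → K)) (i : ℕ) (hid : i ≤ d)
    (U : Submodule K (Fin d → K)) (hU : finrank K U = i) :
    ∃ (w : Fin d → ℝ) (A : (Fin d → K) ≃ₗ[K] (Fin d → K)),
      (coordSet K {j : Fin d | (j : ℕ) < i}).map A.toLinearMap = U ∧
      ∀ x, ((ofWeights K w).filt x).map A.toLinearMap = F.filt x := by
  classical
  obtain ⟨a, ha⟩ := F.eventually_top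
  obtain ⟨b, hb⟩ := F.eventually_bot
  obtain ⟨ι, hι, v, w', S, hind, hUeq, hfil⟩ :=
    adapt_aux (finrank K (Fin d → K)) ⊤ (by rw [finrank_top]) F.filt
      (fun x => le_top) F.antitone' F.left_cont a b (fun x hx => ha x hx) hb U le_top
  obtain ⟨a', ha'1, ha'2⟩ := exists_lowerBound w' a
  have hspan : span K (Set.range v) = ⊤ := by
    have h1 := hfil a'
    rw [ha a' ha'1] at h1
    have h2 : {j : ι | a' ≤ w' j} = Set.univ := Set.eq_univ_of_forall ha'2
    rw [h2, Set.image_univ] at h1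
    exact h1.symm
  let bV : Basis ι K (Fin d → K) := Basis.mk hind (by rw [hspan])
  have hcard : Fintype.card ι = d := by
    have h1 : finrank K (Fin d → K) = d := Module.finrank_fin_fun K
    have h2 : finrank K (Fin d → K) = Fintype.card ι := Module.finrank_eq_card_basis bV
    omega
  have hScard : Fintype.card {o : ι // o ∈ S} = i := by
    have hli : LinearIndependent K (fun s : S => v s.1) :=
      hind.comp (fun s : S => s.1) Subtype.val_injective
    have hr : Set.range (fun s : S => v s.1) = v '' S := by
      ext y
      constructor
      · rintro ⟨s, rfl⟩; exact ⟨s.1, s.2, rfl⟩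
      · rintro ⟨j, hj, rfl⟩; exact ⟨⟨j, hj⟩, rfl⟩
    have h3 := finrank_span_eq_card hli
    rw [hr, ← hUeq, hU] at h3
    exact h3.symm
  have hc1 : Fintype.card {j : Fin d // (j : ℕ) < i} = Fintype.card {o : ι // o ∈ S} := by
    rw [hScard, ← Nat.card_eq_fintype_card, card_fin_lt i hid]
  have hc2 : Fintype.card {j : Fin d // ¬ (j : ℕ) < i} = Fintype.card {o : ι // ¬ o ∈ S} := by
    rw [Fintype.card_subtype_compl, Fintype.card_subtype_compl, Fintype.card_fin, hcard, hc1]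
  let e : Fin d ≃ ι := (Equiv.sumCompl (fun j : Fin d => (j : ℕ) < i)).symm.trans
    ((Equiv.sumCongr (Fintype.equivOfCardEq hc1) (Fintype.equivOfCardEq hc2)).trans
      (Equiv.sumCompl (fun o : ι => o ∈ S)))
  have he : ∀ j : Fin d, (e j ∈ S ↔ (j : ℕ) < i) := by
    intro j
    by_cases hj : (j : ℕ) < i
    · have h1 : e j = ((Fintype.equivOfCardEq hc1) ⟨j, hj⟩).1 := by
        show (Equiv.sumCompl (fun o : ι => o ∈ S))
          ((Equiv.sumCongr (Fintype.equivOfCardEq hc1) (Fintype.equivOfCardEq hc2))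
            ((Equiv.sumCompl (fun j : Fin d => (j : ℕ) < i)).symm j)) = _
        rw [Equiv.sumCompl_symm_apply_of_pos (p := fun j : Fin d => (j : ℕ) < i) hj,
          Equiv.sumCongr_apply, Sum.map_inl, Equiv.sumCompl_apply_inl]
      rw [h1]
      simp only [hj, iff_true]
      exact ((Fintype.equivOfCardEq hc1) ⟨j, hj⟩).2
    · have h1 : e j = ((Fintype.equivOfCardEq hc2) ⟨j, hj⟩).1 := by
        show (Equiv.sumCompl (fun o : ι => o ∈ S))
          ((Equiv.sumCongr (Fintype.equivOfCardEq hc1) (Fintype.equivOfCardEq hc2))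
            ((Equiv.sumCompl (fun j : Fin d => (j : ℕ) < i)).symm j)) = _
        rw [Equiv.sumCompl_symm_apply_of_neg (p := fun j : Fin d => (j : ℕ) < i) hj,
          Equiv.sumCongr_apply, Sum.map_inr, Equiv.sumCompl_apply_inr]
      rw [h1]
      simp only [hj, iff_false]
      exact ((Fintype.equivOfCardEq hc2) ⟨j, hj⟩).2
  set A : (Fin d → K) ≃ₗ[K] (Fin d → K) := (Pi.basisFun K (Fin d)).equiv bV e with hAdef
  have hA : ∀ j : Fin d, A (Pi.single j (1 : K)) = v (e j) := by
    intro j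
    have h1 : (Pi.basisFun K (Fin d)) j = Pi.single j 1 := Pi.basisFun_apply _ _ j
    rw [hAdef, ← h1, Basis.equiv_apply]
    exact Basis.mk_apply _ _ _
  have hmap : ∀ S₀ : Set (Fin d),
      (coordSet K S₀).map A.toLinearMap = span K (v '' (e '' S₀)) := by
    intro S₀
    rw [coordSet_eq_span, Submodule.map_span]
    congr 1
    rw [Set.image_image, Set.image_image]
    have h1 : (fun j : Fin d => A.toLinearMap (Pi.single j (1 : K))) = fun j => v (e j) := by
      funext j
      exact hA j
    rw [h1]
  have hiS : e '' {j : Fin d | (j : ℕ) < i} = S := by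
    ext o
    constructor
    · rintro ⟨j, hj, rfl⟩
      exact (he j).mpr hj
    · intro ho
      refine ⟨e.symm o, ?_, e.apply_symm_apply o⟩
      have h1 := he (e.symm o)
      rw [e.apply_symm_apply] at h1
      exact h1.mp ho
  refine ⟨fun j => w' (e j), A, ?_, ?_⟩
  · rw [hmap, hiS, ← hUeq]
  · intro x
    rw [ofWeights_filt, hmap]
    have h1 : e '' {j : Fin d | x ≤ w' (e j)} = {o : ι | x ≤ w' o} := by
      ext o
      constructor
      · rintro ⟨j, hj, rfl⟩
        exact hj
      · intro ho
        refine ⟨e.symm o, ?_, e.apply_symm_apply o⟩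
        show x ≤ w' (e (e.symm o))
        rw [e.apply_symm_apply]
        exact ho
    rw [h1, ← hfil x]

end AdaptPack

/-- **Statement 10.** On `V = K^d` with `V^i = span(e₁,…,e_i)`, for a type function `g` and a
subfunction `h` of length `i`, the set of filtrations of type `g` inducing the graded-dimension
function `h` on `V^i` is nonempty, and the parabolic `P = {A ∈ GL(V) : A(V^i) = V^i}` acts on
it transitively via `(A·F)^x = A(F^x)`. -/
theorem parabolic_transitive_on_filtrations_with_given_subspace_type
    (K : Type*) [Field K] (d i : ℕ) (hd : 1 ≤ d) (hi1 : 1 ≤ i) (hi2 : i ≤ d - 1)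
    (g h : ℝ → ℕ) (hg_supp : (Function.support g).Finite) (hg_sum : ∑ᶠ x : ℝ, g x = d)
    (hh_le : ∀ x : ℝ, h x ≤ g x) (hh_sum : ∑ᶠ x : ℝ, h x = i)
    (Vi : Submodule K (Fin d → K))
    (hVi : Vi = Submodule.span K
      ((fun j : Fin d => Pi.single j (1 : K)) '' {j : Fin d | (j : ℕ) < i}))
    (Y : Set (RFiltration K (Fin d → K)))
    (hY : Y = {F : RFiltration K (Fin d → K) |
      (∀ x : ℝ, F.grDim x = g x) ∧ (∀ x : ℝ, (F.induced Vi).grDim x = h x)}) :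
    Y.Nonempty ∧
      (∀ A : (Fin d → K) ≃ₗ[K] (Fin d → K), Vi.map A.toLinearMap = Vi →
        ∀ F ∈ Y, ∃ F' ∈ Y, ∀ x : ℝ, (F.filt x).map A.toLinearMap = F'.filt x) ∧
      (∀ F ∈ Y, ∀ F' ∈ Y, ∃ A : (Fin d → K) ≃ₗ[K] (Fin d → K),
        Vi.map A.toLinearMap = Vi ∧ ∀ x : ℝ, (F.filt x).map A.toLinearMap = F'.filt x) := by
  classical
  have hid : i ≤ d := by omega
  have hVi' : Vi = coordSet K {j : Fin d | (j : ℕ) < i} := by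
    rw [hVi, ← coordSet_eq_span]
  have hVirank : finrank K Vi = i := by
    rw [hVi', finrank_coordSet]
    exact card_fin_lt i hid
  -- helper lemmas about maps
  have hsymm : ∀ (e : (Fin d → K) ≃ₗ[K] (Fin d → K)) (p q : Submodule K (Fin d → K)),
      p.map e.toLinearMap = q → q.map e.symm.toLinearMap = p := by
    intro e p q hpq
    rw [← hpq]
    ext z
    constructor
    · rintro ⟨y, ⟨u, hu, rfl⟩, rfl⟩
      simpa [e.symm_apply_apply] using hu
    · intro hz
      exact ⟨e z, ⟨z, hz, rfl⟩, e.symm_apply_apply z⟩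
  have hmaptrans : ∀ (e₁ e₂ : (Fin d → K) ≃ₗ[K] (Fin d → K)) (p : Submodule K (Fin d → K)),
      p.map (e₁.trans e₂).toLinearMap = (p.map e₁.toLinearMap).map e₂.toLinearMap := by
    intro e₁ e₂ p
    rw [← Submodule.map_comp]
    rfl
  refine ⟨?_, ?_, ?_⟩
  · -- Nonempty
    obtain ⟨w₀, hw₀⟩ := realize_pair hid g h hg_supp hg_sum hh_le hh_sum
    refine ⟨ofWeights K w₀, ?_⟩
    rw [hY]
    refine ⟨fun x => ?_, fun x => ?_⟩
    · rw [grDim_ofWeights]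
      exact (hw₀ x).1
    · rw [hVi', grDim_induced_ofWeights]
      exact (hw₀ x).2
  · -- stability
    intro A hA F hF
    refine ⟨F.mapF A, ?_, fun x => rfl⟩
    rw [hY] at hF ⊢
    refine ⟨fun x => ?_, fun x => ?_⟩
    · rw [RFiltration.grDim_mapF]
      exact hF.1 x
    · rw [RFiltration.induced_mapF A F Vi hA, RFiltration.grDim_mapF]
      exact hF.2 x
  · -- transitivity
    intro F hF F' hF'
    rw [hY] at hF hF'
    obtain ⟨w, A, hAVi, hAfil⟩ := adapt F i hid Vi hVirank
    obtain ⟨w', A', hA'Vi, hA'fil⟩ := adapt F' i hid Vi hVirank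
    have hFeq : F = (ofWeights K w).mapF A :=
      RFiltration.ext' (funext fun x => (hAfil x).symm)
    have hF'eq : F' = (ofWeights K w').mapF A' :=
      RFiltration.ext' (funext fun x => (hA'fil x).symm)
    have hAcoord : (coordSet K {j : Fin d | (j : ℕ) < i}).map A.toLinearMap
        = coordSet K {j : Fin d | (j : ℕ) < i} := hAVi.trans hVi'
    have hA'coord : (coordSet K {j : Fin d | (j : ℕ) < i}).map A'.toLinearMap
        = coordSet K {j : Fin d | (j : ℕ) < i} := hA'Vi.trans hVi'
    -- fiber counts for w
    have hcount : ∀ (w₁ : Fin d → ℝ) (A₁ : (Fin d → K) ≃ₗ[K] (Fin d → K))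
        (F₁ : RFiltration K (Fin d → K)),
        F₁ = (ofWeights K w₁).mapF A₁ →
        (coordSet K {j : Fin d | (j : ℕ) < i}).map A₁.toLinearMap
          = coordSet K {j : Fin d | (j : ℕ) < i} →
        (∀ x : ℝ, F₁.grDim x = g x) → (∀ x : ℝ, (F₁.induced Vi).grDim x = h x) →
        (∀ x, Nat.card {j : Fin d // w₁ j = x} = g x) ∧
        (∀ x, Nat.card {j : Fin d // w₁ j = x ∧ (j : ℕ) < i} = h x) := by
      intro w₁ A₁ F₁ hF₁eq hA₁coord hgr hgri
      constructor
      · intro x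
        have h1 := hgr x
        rw [hF₁eq, RFiltration.grDim_mapF, grDim_ofWeights] at h1
        exact h1
      · intro x
        have h1 := hgri x
        rw [hF₁eq, hVi'] at h1
        rw [RFiltration.induced_mapF A₁ (ofWeights K w₁) _ hA₁coord,
          RFiltration.grDim_mapF, grDim_induced_ofWeights] at h1
        exact h1
    obtain ⟨hgw, hhw⟩ := hcount w A F hFeq hAcoord hF.1 hF.2
    obtain ⟨hgw', hhw'⟩ := hcount w' A' F' hF'eq hA'coord hF'.1 hF'.2
    obtain ⟨σ, hσw, hσi⟩ := exists_perm_of_counts (i := i) w w'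
      (fun x => (hgw x).trans (hgw' x).symm)
      (fun x => (hhw x).trans (hhw' x).symm)
    set P : (Fin d → K) ≃ₗ[K] (Fin d → K) := LinearEquiv.funCongrLeft K K σ with hPdef
    have hPfil : ∀ x, ((ofWeights K w).filt x).map P.toLinearMap
        = (ofWeights K w').filt x := by
      intro x
      rw [ofWeights_filt, ofWeights_filt, hPdef, map_funCongrLeft_coord]
      apply coordSet_congr
      intro j
      rw [Set.mem_image_equiv]
      simp only [Equiv.symm_symm, Set.mem_setOf_eq]
      rw [hσw j]
    have hPcoord : (coordSet K {j : Fin d | (j : ℕ) < i}).map P.toLinearMap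
        = coordSet K {j : Fin d | (j : ℕ) < i} := by
      rw [hPdef, map_funCongrLeft_coord]
      apply coordSet_congr
      intro j
      rw [Set.mem_image_equiv]
      simp only [Equiv.symm_symm, Set.mem_setOf_eq]
      exact hσi j
    refine ⟨(A.symm.trans P).trans A', ?_, fun x => ?_⟩
    · rw [hmaptrans, hmaptrans]
      have h1 : Vi.map A.symm.toLinearMap = coordSet K {j : Fin d | (j : ℕ) < i} :=
        hsymm A _ _ hAVi
      rw [h1, hPcoord, hA'Vi]
    · rw [hmaptrans, hmaptrans]
      have h1 : (F.filt x).map A.symm.toLinearMap = (ofWeights K w).filt x :=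
        hsymm A _ _ (hAfil x)
      rw [h1, hPfil x, hA'fil x]
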